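/- Let P : C^op → InfSL be an elementary doctrine. The elementary quotient completion Q_P is a category: objects are pairs (A, ρ) with ρ a P-equivalence relation over A; arrows [f] : (A,ρ) → (B,σ) are equivalence classes of arrows f : A → B in C with ρ ≤ P(f×f)(σ), where f ∼ g iff ⊤_A = P⟨f,g⟩(σ). Composition and identities are inherited from C and are well-defined on equivalence classes. Moreover Q_P has binary products: (A,ρ) × (B,σ) = (A×B, ρ⊠σ) where ρ⊠σ = P⟨pr1,pr3⟩(ρ) ∧ P⟨pr2,pr4⟩(σ), with projections [pr1] and [pr2]. -/

import Mathlib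

/-!
Read a relation `ρ` over `A` at generalized elements `x y : T ⟶ A` through `P⟨x,y⟩(ρ)`.
Reindexing reflexivity, symmetry and transitivity of `ρ` along `⟨x,x⟩`, `⟨y,x⟩` and
`⟨⟨x,y⟩,z⟩` gives the same laws at generalized elements, hence for `∼`; composition respects
`∼` because `P⟨f≫g, f'≫g⟩(τ) = P⟨f,f'⟩(P(g×g)(τ)) ≥ P⟨f,f'⟩(σ)`. Since `ρ ⊠ σ` holds at
`⟨m,m'⟩` iff `ρ` and `σ` hold at the components, `⟨h,k⟩` is the mediating arrow. Finally
`ρ ⊠ σ` is a meet of pullbacks of equivalence relations along `prᵢ × prᵢ`; such a pullback is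
reflexive because every arrow preserves `δ`, a consequence of the substitution rule
`P⟨1,u⟩(β) ∧ P⟨u,v⟩(δ) ≤ P⟨1,v⟩(β)` obtained from the adjunction defining `δ`.
-/

open CategoryTheory CategoryTheory.Limits Opposite

noncomputable section

universe w v u

namespace DoctrinePaper

variable {C : Type u} [Category.{v} C] [HasFiniteProducts C]

/-- The fiber of a primary doctrine `P : Cᵒᵖ ⥤ SemilatInfCat` over an object `A`. -/
abbrev Fib (P : Cᵒᵖ ⥤ SemilatInfCat.{w}) (A : C) : Type w :=
  ↥(P.obj (op A))

/-- Reindexing along an arrow `f : A ⟶ B`. -/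
def rmap (P : Cᵒᵖ ⥤ SemilatInfCat.{w}) {A B : C} (f : A ⟶ B) :
    Fib P B → Fib P A :=
  fun x => (P.map f.op) x

variable (P : Cᵒᵖ ⥤ SemilatInfCat.{w})

/-- An elementary doctrine: fibered equalities `δ A ∈ P (A ⨯ A)` such that
`E_e(α) = P⟨pr1,pr2⟩(α) ⊓ P⟨pr2,pr3⟩(δ A)` is left adjoint to reindexing along
`e = ⟨pr1,pr2,pr2⟩ : X ⨯ A ⟶ (X ⨯ A) ⨯ A`. -/
structure IsElementary where
  δ : ∀ A : C, Fib P (A ⨯ A)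
  adj :
    ∀ (X A : C) (α : Fib P (X ⨯ A)) (β : Fib P ((X ⨯ A) ⨯ A)),
      (rmap P (prod.fst : (X ⨯ A) ⨯ A ⟶ X ⨯ A) α ⊓
          rmap P (prod.lift (prod.fst ≫ prod.snd) prod.snd : (X ⨯ A) ⨯ A ⟶ A ⨯ A) (δ A) ≤ β)
        ↔ α ≤ rmap P (prod.lift (𝟙 (X ⨯ A)) prod.snd : X ⨯ A ⟶ (X ⨯ A) ⨯ A) β

/-- A `P`-equivalence relation over `A`. -/
structure IsEqRel (hE : IsElementary P) {A : C} (ρ : Fib P (A ⨯ A)) : Prop where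
  refl : hE.δ A ≤ ρ
  symm : ρ = rmap P (prod.lift prod.snd prod.fst : A ⨯ A ⟶ A ⨯ A) ρ
  trans :
    rmap P (prod.fst : (A ⨯ A) ⨯ A ⟶ A ⨯ A) ρ ⊓
        rmap P (prod.lift (prod.fst ≫ prod.snd) prod.snd : (A ⨯ A) ⨯ A ⟶ A ⨯ A) ρ ≤
      rmap P (prod.lift (prod.fst ≫ prod.fst) prod.snd : (A ⨯ A) ⨯ A ⟶ A ⨯ A) ρ

/-- An elementary existential doctrine, together with the induced left adjoints
`∃_f` along all arrows, satisfying the adjunction law, Frobenius reciprocity, and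
the Beck–Chevalley condition along pullbacks of projections. -/
structure IsExistential extends IsElementary P where
  E : ∀ {A B : C}, (A ⟶ B) → Fib P A → Fib P B
  adjE : ∀ {A B : C} (f : A ⟶ B) (α : Fib P A) (β : Fib P B),
    E f α ≤ β ↔ α ≤ rmap P f β
  frobenius : ∀ {A B : C} (f : A ⟶ B) (α : Fib P A) (β : Fib P B),
    E f (α ⊓ rmap P f β) = E f α ⊓ β
  beckChevalley : ∀ {B A A' : C} (f : A' ⟶ A) (β : Fib P (B ⨯ A)),
    E (prod.snd : B ⨯ A' ⟶ A') (rmap P (prod.map (𝟙 B) f) β) =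
      rmap P f (E (prod.snd : B ⨯ A ⟶ A) β)

/-- Descent data for a relation `ρ` over `A`. -/
def Des {A : C} (ρ : Fib P (A ⨯ A)) : Set (Fib P A) :=
  {α | rmap P (prod.fst : A ⨯ A ⟶ A) α ⊓ ρ ≤ rmap P (prod.snd : A ⨯ A ⟶ A) α}

/-- Comprehensive diagonals: `f = g` iff `⊤ = P⟨f,g⟩(δ)`. -/
def ComprehensiveDiagonals (hE : IsElementary P) : Prop :=
  ∀ {X A : C} (f g : X ⟶ A), f = g ↔ rmap P (prod.lift f g) (hE.δ A) = ⊤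

/-- (Weak) comprehension structure. -/
structure Comprehension where
  cObj : ∀ {A : C}, Fib P A → C
  cArr : ∀ {A : C} (α : Fib P A), cObj α ⟶ A
  cTop : ∀ {A : C} (α : Fib P A), rmap P (cArr α) α = ⊤
  cUniv : ∀ {A : C} (α : Fib P A) {Y : C} (f : Y ⟶ A),
    rmap P f α = ⊤ → ∃ k : Y ⟶ cObj α, k ≫ cArr α = f

/-- Full comprehension. -/
def Comprehension.Full (hC : Comprehension P) : Prop :=
  ∀ {A : C} (α β : Fib P A), α ≤ β ↔ rmap P (hC.cArr α) β = ⊤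

/-- Strong comprehension: comprehension arrows are monic. -/
def Comprehension.Strong (hC : Comprehension P) : Prop :=
  ∀ {A : C} (α : Fib P A), Mono (hC.cArr α)

/-- `P`-injective arrow. -/
def PInj (hE : IsElementary P) {X A : C} (f : X ⟶ A) : Prop :=
  rmap P (prod.map f f) (hE.δ A) = hE.δ X

/-- `P`-surjective arrow. -/
def PSurj (hEx : IsExistential P) {X A : C} (f : X ⟶ A) : Prop :=
  hEx.E f (⊤ : Fib P X) = ⊤

/-- The product relation `ρ ⊠ σ` on `(A ⨯ B) ⨯ (A ⨯ B)`. -/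
def boxprod {A B : C} (ρ : Fib P (A ⨯ A)) (σ : Fib P (B ⨯ B)) :
    Fib P ((A ⨯ B) ⨯ (A ⨯ B)) :=
  rmap P (prod.map prod.fst prod.fst) ρ ⊓ rmap P (prod.map prod.snd prod.snd) σ

/-- The hom condition of the elementary quotient completion: `f : A ⟶ B`
represents an arrow `(A,ρ) ⟶ (B,σ)` iff `ρ ≤ P(f×f)(σ)`. -/
def QHomC {A B : C} (ρ : Fib P (A ⨯ A)) (σ : Fib P (B ⨯ B)) (f : A ⟶ B) : Prop :=
  ρ ≤ rmap P (prod.map f f) σ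

/-- The equivalence on representatives: `f ∼ g` iff `⊤ = P⟨f,g⟩(σ)`. -/
def QEq {A B : C} (σ : Fib P (B ⨯ B)) (f g : A ⟶ B) : Prop :=
  rmap P (prod.lift f g) σ = ⊤

variable {P}

attribute [local simp] prod.lift_fst prod.lift_snd prod.lift_fst_assoc prod.lift_snd_assoc

section Functoriality

omit [HasFiniteProducts C]

lemma rmap_id {A : C} (x : Fib P A) : rmap P (𝟙 A) x = x := by
  simp [rmap]

lemma rmap_comp {A B D : C} (f : A ⟶ B) (g : B ⟶ D) (x : Fib P D) :
    rmap P (f ≫ g) x = rmap P f (rmap P g x) := by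
  simp [rmap]

lemma rmap_mono {A B : C} (f : A ⟶ B) {x y : Fib P B} (h : x ≤ y) :
    rmap P f x ≤ rmap P f y :=
  OrderHomClass.mono (show InfTopHom _ _ from P.map f.op) h

lemma rmap_inf {A B : C} (f : A ⟶ B) (x y : Fib P B) :
    rmap P f (x ⊓ y) = rmap P f x ⊓ rmap P f y :=
  map_inf (show InfTopHom _ _ from P.map f.op) x y

lemma rmap_top {A B : C} (f : A ⟶ B) : rmap P f (⊤ : Fib P B) = ⊤ :=
  map_top (show InfTopHom _ _ from P.map f.op)

end Functoriality

lemma rmap_rmap_prodMap {T X Y A B : C} (g : T ⟶ X ⨯ Y) (f : X ⟶ A) (f' : Y ⟶ B)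
    (ρ : Fib P (A ⨯ B)) :
    rmap P g (rmap P (prod.map f f') ρ) =
      rmap P (prod.lift (g ≫ prod.fst ≫ f) (g ≫ prod.snd ≫ f')) ρ := by
  rw [← rmap_comp]
  congr 1
  ext <;> simp

lemma rmap_lift_rmap_prodMap {T X Y A B : C} (x : T ⟶ X) (y : T ⟶ Y) (f : X ⟶ A)
    (f' : Y ⟶ B) (ρ : Fib P (A ⨯ B)) :
    rmap P (prod.lift x y) (rmap P (prod.map f f') ρ) = rmap P (prod.lift (x ≫ f) (y ≫ f')) ρ := by
  rw [← rmap_comp, prod.lift_map]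

namespace IsElementary

variable (hE : IsElementary P)

lemma rmap_lift_self_δ {Y A : C} (h : Y ⟶ A) : rmap P (prod.lift h h) (hE.δ A) = ⊤ := by
  have unit : (⊤ : Fib P (Y ⨯ A)) ≤ rmap P (prod.lift (𝟙 (Y ⨯ A)) prod.snd)
      (rmap P (prod.lift (prod.fst ≫ prod.snd) prod.snd) (hE.δ A)) :=
    (hE.adj Y A ⊤ _).mp inf_le_right
  have diag := rmap_mono (prod.lift (𝟙 Y) h) unit
  rw [rmap_top, ← rmap_comp, ← rmap_comp] at diag
  convert top_le_iff.mp diag using 2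
  ext <;> simp

lemma rmap_lift_inf_δ_le {Y A : C} (u v : Y ⟶ A) (β : Fib P (Y ⨯ A)) :
    rmap P (prod.lift (𝟙 Y) u) β ⊓ rmap P (prod.lift u v) (hE.δ A) ≤
      rmap P (prod.lift (𝟙 Y) v) β := by
  let β' := rmap P (prod.lift (prod.fst ≫ prod.fst) prod.snd : (Y ⨯ A) ⨯ A ⟶ Y ⨯ A) β
  have counit := rmap_mono (prod.lift (prod.lift (𝟙 Y) u) v) ((hE.adj Y A _ β').mpr le_rfl)
  simp only [β', rmap_inf, ← rmap_comp] at counit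
  convert counit using 3 <;> ext <;> simp

lemma δ_le_rmap_prodMap {X A : C} (f : X ⟶ A) :
    hE.δ X ≤ rmap P (prod.map f f) (hE.δ A) := by
  have subst := hE.rmap_lift_inf_δ_le prod.fst prod.snd
    (rmap P (prod.lift (prod.fst ≫ prod.fst ≫ f) (prod.snd ≫ f)) (hE.δ A))
  simp only [← rmap_comp, prod.lift_fst_snd, rmap_id] at subst
  convert subst using 1
  · simp [hE.rmap_lift_self_δ]
  · congr 1
    ext <;> simp

end IsElementary

namespace IsEqRel

variable {hE : IsElementary P} {A : C} {ρ : Fib P (A ⨯ A)}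

lemma rmap_lift_self (hρ : IsEqRel P hE ρ) {T : C} (x : T ⟶ A) :
    rmap P (prod.lift x x) ρ = ⊤ :=
  top_le_iff.mp (hE.rmap_lift_self_δ x ▸ rmap_mono _ hρ.refl)

lemma rmap_lift_comm (hρ : IsEqRel P hE ρ) {T : C} (x y : T ⟶ A) :
    rmap P (prod.lift x y) ρ = rmap P (prod.lift y x) ρ := by
  conv_lhs => rw [hρ.symm, ← rmap_comp]
  congr 1
  ext <;> simp

lemma rmap_lift_trans (hρ : IsEqRel P hE ρ) {T : C} (x y z : T ⟶ A) :
    rmap P (prod.lift x y) ρ ⊓ rmap P (prod.lift y z) ρ ≤ rmap P (prod.lift x z) ρ := by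
  have trans := rmap_mono (prod.lift (prod.lift x y) z) hρ.trans
  simp only [rmap_inf, ← rmap_comp] at trans
  convert trans using 3 <;> ext <;> simp

lemma inf {σ : Fib P (A ⨯ A)} (hρ : IsEqRel P hE ρ) (hσ : IsEqRel P hE σ) :
    IsEqRel P hE (ρ ⊓ σ) where
  refl := le_inf hρ.refl hσ.refl
  symm := by rw [rmap_inf, ← hρ.symm, ← hσ.symm]
  trans := by
    simp only [rmap_inf]
    exact le_inf ((inf_le_inf inf_le_left inf_le_left).trans hρ.trans)
      ((inf_le_inf inf_le_right inf_le_right).trans hσ.trans)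

lemma rmap_prodMap (hρ : IsEqRel P hE ρ) {X : C} (f : X ⟶ A) :
    IsEqRel P hE (rmap P (prod.map f f) ρ) where
  refl := (hE.δ_le_rmap_prodMap f).trans (rmap_mono _ hρ.refl)
  symm := by
    rw [rmap_rmap_prodMap, ← prod.lift_fst_comp_snd_comp, hρ.rmap_lift_comm]
    simp
  trans := by
    simp only [rmap_rmap_prodMap, prod.lift_fst_assoc, prod.lift_snd_assoc, Category.assoc]
    exact hρ.rmap_lift_trans _ _ _

lemma boxprod {B : C} {σ : Fib P (B ⨯ B)} (hρ : IsEqRel P hE ρ) (hσ : IsEqRel P hE σ) :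
    IsEqRel P hE (DoctrinePaper.boxprod P ρ σ) :=
  (hρ.rmap_prodMap prod.fst).inf (hσ.rmap_prodMap prod.snd)

end IsEqRel

section QuotientArrows

variable {hE : IsElementary P} {A B D : C} {ρ : Fib P (A ⨯ A)} {σ : Fib P (B ⨯ B)}

lemma QEq.refl (hσ : IsEqRel P hE σ) (f : A ⟶ B) : QEq P σ f f :=
  hσ.rmap_lift_self f

lemma QEq.symm (hσ : IsEqRel P hE σ) {f g : A ⟶ B} (h : QEq P σ f g) : QEq P σ g f :=
  (hσ.rmap_lift_comm g f).trans h

lemma QEq.trans (hσ : IsEqRel P hE σ) {f g h : A ⟶ B} (hfg : QEq P σ f g)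
    (hgh : QEq P σ g h) : QEq P σ f h := by
  have := hσ.rmap_lift_trans f g h
  rwa [hfg, hgh, top_inf_eq, top_le_iff] at this

lemma QHomC.id : QHomC P ρ ρ (𝟙 A) := by
  simp [QHomC, rmap_id]

lemma QHomC.comp {τ : Fib P (D ⨯ D)} {f : A ⟶ B} {g : B ⟶ D} (hf : QHomC P ρ σ f)
    (hg : QHomC P σ τ g) : QHomC P ρ τ (f ≫ g) := by
  rw [QHomC, ← prod.map_map, rmap_comp]
  exact hf.trans (rmap_mono _ hg)

lemma QEq.comp {τ : Fib P (D ⨯ D)} (hτ : IsEqRel P hE τ) {f f' : A ⟶ B} {g g' : B ⟶ D}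
    (hg : QHomC P σ τ g) (hff' : QEq P σ f f') (hgg' : QEq P τ g g') :
    QEq P τ (f ≫ g) (f' ≫ g') := by
  have left : QEq P τ (f ≫ g) (f' ≫ g) := by
    have := rmap_mono (prod.lift f f') hg
    rwa [hff', rmap_lift_rmap_prodMap, top_le_iff] at this
  have right : QEq P τ (f' ≫ g) (f' ≫ g') := by
    rw [QEq, ← prod.comp_lift, rmap_comp, hgg', rmap_top]
  exact left.trans hτ right

lemma QHomC.lift {T : C} {τ : Fib P (T ⨯ T)} {h : T ⟶ A} {k : T ⟶ B} (hh : QHomC P τ ρ h)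
    (hk : QHomC P τ σ k) : QHomC P τ (boxprod P ρ σ) (prod.lift h k) := by
  simp only [QHomC, boxprod, rmap_inf, ← rmap_comp, prod.map_map, prod.lift_fst, prod.lift_snd]
  exact le_inf hh hk

lemma qEq_boxprod_iff {T : C} (m m' : T ⟶ A ⨯ B) :
    QEq P (boxprod P ρ σ) m m' ↔
      QEq P ρ (m ≫ prod.fst) (m' ≫ prod.fst) ∧ QEq P σ (m ≫ prod.snd) (m' ≫ prod.snd) := by
  simp only [QEq, boxprod, rmap_inf, rmap_lift_rmap_prodMap, inf_eq_top_iff]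

end QuotientArrows

/-- The elementary quotient completion `Q_P` is a category with
binary products: the relation `∼` on representatives is an equivalence relation,
identities and composition are well defined on equivalence classes, and
`(A ⨯ B, ρ ⊠ σ)` with the projections is a binary product of `(A,ρ)` and
`(B,σ)`. -/
theorem quotient_completion_is_category_with_products (hE : IsElementary P) :
    (∀ {A B : C} (ρ : Fib P (A ⨯ A)) (σ : Fib P (B ⨯ B)),
        IsEqRel P hE ρ → IsEqRel P hE σ →
        (∀ f : A ⟶ B, QHomC P ρ σ f → QEq P σ f f) ∧
        (∀ f g : A ⟶ B, QHomC P ρ σ f → QHomC P ρ σ g →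
          QEq P σ f g → QEq P σ g f) ∧
        (∀ f g h : A ⟶ B, QHomC P ρ σ f → QHomC P ρ σ g → QHomC P ρ σ h →
          QEq P σ f g → QEq P σ g h → QEq P σ f h)) ∧
    (∀ {A : C} (ρ : Fib P (A ⨯ A)), IsEqRel P hE ρ → QHomC P ρ ρ (𝟙 A)) ∧
    (∀ {A B D : C} (ρ : Fib P (A ⨯ A)) (σ : Fib P (B ⨯ B)) (τ : Fib P (D ⨯ D)),
        IsEqRel P hE ρ → IsEqRel P hE σ → IsEqRel P hE τ →
        ∀ (f f' : A ⟶ B) (g g' : B ⟶ D),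
          QHomC P ρ σ f → QHomC P ρ σ f' → QHomC P σ τ g → QHomC P σ τ g' →
          QHomC P ρ τ (f ≫ g) ∧
            (QEq P σ f f' → QEq P τ g g' → QEq P τ (f ≫ g) (f' ≫ g'))) ∧
    (∀ {A B : C} (ρ : Fib P (A ⨯ A)) (σ : Fib P (B ⨯ B)),
        IsEqRel P hE ρ → IsEqRel P hE σ →
        IsEqRel P hE (boxprod P ρ σ) ∧
        QHomC P (boxprod P ρ σ) ρ prod.fst ∧
        QHomC P (boxprod P ρ σ) σ prod.snd ∧
        (∀ {T : C} (τ : Fib P (T ⨯ T)), IsEqRel P hE τ →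
          ∀ (h : T ⟶ A) (k : T ⟶ B), QHomC P τ ρ h → QHomC P τ σ k →
            ∃ m : T ⟶ A ⨯ B, QHomC P τ (boxprod P ρ σ) m ∧
              QEq P ρ (m ≫ prod.fst) h ∧ QEq P σ (m ≫ prod.snd) k ∧
              ∀ m' : T ⟶ A ⨯ B, QHomC P τ (boxprod P ρ σ) m' →
                QEq P ρ (m' ≫ prod.fst) h → QEq P σ (m' ≫ prod.snd) k →
                  QEq P (boxprod P ρ σ) m m')) := by
  refine ⟨fun ρ σ _ hσ => ⟨fun f _ => .refl hσ f, fun _ _ _ _ => .symm hσ,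
      fun _ _ _ _ _ _ => .trans hσ⟩,
    fun _ _ => .id,
    fun _ _ _ _ _ hτ _ _ _ _ hf _ hg _ => ⟨hf.comp hg, .comp hτ hg⟩,
    fun ρ σ hρ hσ => ⟨hρ.boxprod hσ, inf_le_left, inf_le_right, ?_⟩⟩
  intro T τ _ h k hh hk
  refine ⟨prod.lift h k, hh.lift hk, ?_, ?_, fun m' _ hm'h hm'k => ?_⟩
  · rw [prod.lift_fst]; exact .refl hρ h
  · rw [prod.lift_snd]; exact .refl hσ k
  · rw [qEq_boxprod_iff, prod.lift_fst, prod.lift_snd]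
    exact ⟨hm'h.symm hρ, hm'k.symm hσ⟩

end DoctrinePaper
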